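/- The conformal center point of a sphere is recovered by sandwiching infinity between two copies of the dual sphere vector: for all c ∈ ℝ³ and r ∈ ℝ, setting s = C(c) - ½r² e∞, in the Clifford algebra Cl(4,1) one has ι(s) * ι(e∞) * ι(s) = -2 • ι(C(c)). -/

import Mathlib

open scoped RealInnerProductSpace

/-- The vector space of the conformal model: `ℝ³ × ℝ × ℝ`,
with elements `(v, α, β)`. -/
abbrev ConfV : Type := (EuclideanSpace ℝ (Fin 3)) × ℝ × ℝ

/-- The companion bilinear form of the conformal quadratic form. -/
noncomputable def confB : LinearMap.BilinForm ℝ ConfV :=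
  LinearMap.mk₂ ℝ
    (fun x y => 2 * ⟪x.1, y.1⟫ - 2 * (x.2.1 * y.2.2 + x.2.2 * y.2.1))
    (fun x x' y => by
      simp only [Prod.fst_add, Prod.snd_add, inner_add_left]; ring)
    (fun a x y => by
      simp only [Prod.smul_fst, Prod.smul_snd, real_inner_smul_left, smul_eq_mul]; ring)
    (fun x y y' => by
      simp only [Prod.fst_add, Prod.snd_add, inner_add_right]; ring)
    (fun a x y => by
      simp only [Prod.smul_fst, Prod.smul_snd, real_inner_smul_right, smul_eq_mul]; ring)

/-- The conformal quadratic form `Q (v, α, β) = ‖v‖² - 2αβ` of signature `(4,1)`. -/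
noncomputable def Qc : QuadraticForm ℝ ConfV where
  toFun x := ‖x.1‖ ^ 2 - 2 * x.2.1 * x.2.2
  toFun_smul a x := by
    simp only [Prod.smul_fst, Prod.smul_snd, norm_smul, mul_pow, Real.norm_eq_abs, sq_abs,
      smul_eq_mul]
    ring
  exists_companion' :=
    ⟨confB, fun x y => by
      simp only [confB, LinearMap.mk₂_apply, Prod.fst_add, Prod.snd_add, norm_add_sq_real]
      ring⟩

/-- The null vector representing the origin. -/
noncomputable def e₀ : ConfV := (0, 1, 0)

/-- The null vector representing infinity. -/
noncomputable def eInf : ConfV := (0, 0, 1)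

/-- The symmetric bilinear form associated to `Qc`. -/
noncomputable def Bc (x y : ConfV) : ℝ := (Qc (x + y) - Qc x - Qc y) / 2

/-- The conformal embedding `C x = x + ½‖x‖² e∞ + e₀`. -/
noncomputable def confC (x : EuclideanSpace ℝ (Fin 3)) : ConfV := (x, 1, ‖x‖ ^ 2 / 2)

/-- The canonical embedding into the conformal geometric algebra `Cl(4,1)`. -/
noncomputable def ιc : ConfV →ₗ[ℝ] CliffordAlgebra Qc :=
  CliffordAlgebra.ι Qc

/-! Sandwiching `b` between two copies of a vector `a` is the reflection-type identity
`a b a = polar(a, b) a - Q(a) b` (`CliffordAlgebra.ι_mul_ι_mul_ι`); for the dual sphere `s`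
one has `Q(s) = r²` and `polar(s, e∞) = 2 B(s, e∞) = -2`, so the `r²` terms cancel. -/

theorem polar_Qc_eInf (x : ConfV) : QuadraticMap.polar Qc x eInf = -2 * x.2.1 := by
  simp only [QuadraticMap.polar, Qc, QuadraticMap.coe_mk, eInf, Prod.fst_add, Prod.snd_add,
    add_zero, norm_zero]
  ring

theorem Qc_confC_sub_smul_eInf (c : EuclideanSpace ℝ (Fin 3)) (t : ℝ) :
    Qc (confC c - t • eInf) = 2 * t := by
  simp only [Qc, QuadraticMap.coe_mk, confC, eInf, Prod.fst_sub, Prod.snd_sub, Prod.smul_fst,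
    Prod.smul_snd, smul_zero, sub_zero, smul_eq_mul, mul_one]
  ring

theorem sphere_sandwich_infinity_gives_center (c : EuclideanSpace ℝ (Fin 3)) (r : ℝ) :
    ιc (confC c - (r ^ 2 / 2) • eInf) * ιc eInf * ιc (confC c - (r ^ 2 / 2) • eInf) =
      (-2 : ℝ) • ιc (confC c) := by
  have hpolar : QuadraticMap.polar Qc (confC c - (r ^ 2 / 2) • eInf) eInf = -2 := by
    rw [polar_Qc_eInf]
    simp [confC, eInf]
  rw [ιc, CliffordAlgebra.ι_mul_ι_mul_ι, hpolar, Qc_confC_sub_smul_eInf, ← map_smul]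
  congr 1
  module
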